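/- If c: ℝᵈ → ℝ is twice continuously differentiable and α-strongly convex with α > 0, β ∈ ℝᵈ with ‖β‖ = 1, s ∈ ℝ, and σ² > 1/(α√(2πe)), then the function x ↦ -c(x - z) + 1 - Φ_σ(s - βᵀx) is strictly concave on ℝᵈ, where Φ_σ is the CDF of N(0,σ²). -/

import Mathlib

open Real Set RealInnerProductSpace

/-- The CDF of the normal distribution with mean 0 and variance σ². -/
noncomputable def normalCDF (σ : ℝ) (s : ℝ) : ℝ :=
  ∫ y in Set.Iic s, (1 / (σ * Real.sqrt (2 * Real.pi))) * Real.exp (-y ^ 2 / (2 * σ ^ 2))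

/-!
Write the utility as `-c (x - z) + g ⟪β, x⟫` with `g t = 1 - Φ_σ (s - t)`. The first summand is
`α`-strongly concave. Since `g'' t = -φ_σ' (s - t) ≤ 1 / (σ² √(2πe))`, `g` is strongly concave
with the negative modulus `-1 / (σ² √(2πe))`, and composing with the contraction `x ↦ ⟪β, x⟫`
preserves this. Strong concavity moduli add, and the noise assumption makes the sum positive.
-/

section StrongConcavity

variable {E F : Type*} [NormedAddCommGroup E] [NormedSpace ℝ E]
  [NormedAddCommGroup F] [NormedSpace ℝ F]

lemma StrongConvexOn.comp_sub_const {m : ℝ} {f : E → ℝ} (hf : StrongConvexOn univ m f) (z : E) :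
    StrongConvexOn univ m fun x ↦ f (x - z) := by
  refine ⟨convex_univ, fun x _ y _ a b ha hb hab ↦ ?_⟩
  have h := hf.2 (mem_univ (x - z)) (mem_univ (y - z)) ha hb hab
  obtain rfl : b = 1 - a := by linarith
  rwa [sub_sub_sub_cancel_right, show a • (x - z) + (1 - a) • (y - z) = a • x + (1 - a) • y - z
    by module] at h

lemma StrongConcaveOn.add {s : Set E} {m n : ℝ} {f g : E → ℝ} (hf : StrongConcaveOn s m f)
    (hg : StrongConcaveOn s n g) : StrongConcaveOn s (m + n) (f + g) := by
  refine (UniformConcaveOn.add hf hg).mono fun r ↦ le_of_eq ?_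
  simp only [Pi.add_apply]
  ring

lemma StrongConcaveOn.comp_continuousLinearMap {m : ℝ} (hm : m ≤ 0) {g : F → ℝ}
    (hg : StrongConcaveOn univ m g) (ℓ : E →L[ℝ] F) (hℓ : ‖ℓ‖ ≤ 1) :
    StrongConcaveOn univ m (g ∘ ℓ) := by
  refine ⟨convex_univ, fun x _ y _ a b ha hb hab ↦ ?_⟩
  have h := hg.2 (mem_univ (ℓ x)) (mem_univ (ℓ y)) ha hb hab
  have hcontract : ‖ℓ x - ℓ y‖ ≤ ‖x - y‖ := by
    simpa [← map_sub] using ℓ.le_of_opNorm_le hℓ (x - y)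
  have hmod : m / 2 * ‖x - y‖ ^ 2 ≤ m / 2 * ‖ℓ x - ℓ y‖ ^ 2 :=
    mul_le_mul_of_nonpos_left (by gcongr) (by linarith)
  simp only [Function.comp_apply, map_add, map_smul]
  nlinarith [mul_le_mul_of_nonneg_left hmod (mul_nonneg ha hb)]

lemma strongConcaveOn_univ_of_hasDerivAt2 {m : ℝ} {f f' f'' : ℝ → ℝ}
    (hf : ∀ x, HasDerivAt f (f' x) x) (hf' : ∀ x, HasDerivAt f' (f'' x) x)
    (hf'' : ∀ x, f'' x ≤ -m) : StrongConcaveOn univ m f := by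
  rw [strongConcaveOn_iff_convex]
  simp only [Real.norm_eq_abs, sq_abs]
  have hq (x : ℝ) : HasDerivAt (fun x ↦ m / 2 * x ^ 2) (m * x) x := by
    refine ((hasDerivAt_pow 2 x).const_mul (m / 2)).congr_deriv ?_
    norm_num
    ring
  refine concaveOn_of_hasDerivWithinAt2_nonpos convex_univ (f' := fun x ↦ f' x + m * x)
    (f'' := fun x ↦ f'' x + m) (fun x _ ↦ ((hf x).add (hq x)).continuousAt.continuousWithinAt)
    (fun x _ ↦ ((hf x).add (hq x)).hasDerivWithinAt)
    (fun x _ ↦ ((hf' x).add ((hasDerivAt_id x).const_mul m)).hasDerivWithinAt.congr_deriv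
      (by simp)) (fun x _ ↦ by linarith [hf'' x])

end StrongConcavity

section Gaussian

noncomputable def normalPDF (σ y : ℝ) : ℝ :=
  1 / (σ * √(2 * π)) * exp (-y ^ 2 / (2 * σ ^ 2))

variable {σ : ℝ}

lemma continuous_normalPDF : Continuous (normalPDF σ) := by
  unfold normalPDF
  fun_prop

lemma integrable_normalPDF (hσ : 0 < σ) : MeasureTheory.Integrable (normalPDF σ) := by
  have h := (integrable_exp_neg_mul_sq (b := 1 / (2 * σ ^ 2)) (by positivity)).const_mul
    (1 / (σ * √(2 * π)))
  convert h using 2 with y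
  unfold normalPDF
  ring_nf

lemma hasDerivAt_normalCDF (hσ : 0 < σ) (u : ℝ) :
    HasDerivAt (normalCDF σ) (normalPDF σ u) u := by
  have hint := integrable_normalPDF hσ
  have hsplit : normalCDF σ = fun v ↦ normalCDF σ 0 + ∫ y in (0 : ℝ)..v, normalPDF σ y := by
    funext v
    have h := intervalIntegral.integral_Iic_sub_Iic hint.integrableOn hint.integrableOn
      (a := 0) (b := v)
    unfold normalCDF normalPDF at h ⊢
    linarith
  rw [hsplit]
  exact (intervalIntegral.integral_hasDerivAt_right hint.intervalIntegrable
    (continuous_normalPDF.stronglyMeasurableAtFilter _ _)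
    continuous_normalPDF.continuousAt).const_add _

lemma hasDerivAt_normalPDF (y : ℝ) :
    HasDerivAt (normalPDF σ) (-(y / σ ^ 2) * normalPDF σ y) y := by
  unfold normalPDF
  refine ((((hasDerivAt_pow 2 y).fun_neg).div_const (2 * σ ^ 2)).exp.const_mul
    (1 / (σ * √(2 * π)))).congr_deriv ?_
  field_simp
  ring

lemma mul_exp_neg_sq_div_two_le (t : ℝ) : t * exp (-t ^ 2 / 2) ≤ exp (-1 / 2) := by
  have h : t ≤ exp ((t ^ 2 - 1) / 2) := by
    nlinarith [add_one_le_exp ((t ^ 2 - 1) / 2), sq_nonneg (t - 1)]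
  calc t * exp (-t ^ 2 / 2) ≤ exp ((t ^ 2 - 1) / 2) * exp (-t ^ 2 / 2) := by gcongr
    _ = exp (-1 / 2) := by rw [← exp_add]; ring_nf

-- The left side is `-φ_σ' y`; the bound is attained at `y = σ`.
lemma div_sq_mul_normalPDF_le (hσ : 0 < σ) (y : ℝ) :
    y / σ ^ 2 * normalPDF σ y ≤ (σ ^ 2 * √(2 * π * exp 1))⁻¹ := by
  have hsqrt : √(2 * π * exp 1) = √(2 * π) * exp (1 / 2) := by
    rw [sqrt_mul (by positivity), ← exp_half]
  have hrescale : y / σ ^ 2 * normalPDF σ y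
      = (σ ^ 2 * √(2 * π))⁻¹ * (y / σ * exp (-(y / σ) ^ 2 / 2)) := by
    unfold normalPDF
    field_simp
  calc y / σ ^ 2 * normalPDF σ y
      ≤ (σ ^ 2 * √(2 * π))⁻¹ * exp (-1 / 2) := by
        rw [hrescale]; gcongr; exact mul_exp_neg_sq_div_two_le _
    _ = (σ ^ 2 * √(2 * π * exp 1))⁻¹ := by
        rw [hsqrt, neg_div, exp_neg]; ring

lemma strongConcaveOn_one_sub_normalCDF_sub (hσ : 0 < σ) (s : ℝ) :
    StrongConcaveOn univ (-(σ ^ 2 * √(2 * π * exp 1))⁻¹) fun t ↦ 1 - normalCDF σ (s - t) := by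
  have hinner (t : ℝ) : HasDerivAt (fun t ↦ s - t) (-1) t := (hasDerivAt_id t).const_sub s
  refine strongConcaveOn_univ_of_hasDerivAt2 (f' := fun t ↦ normalPDF σ (s - t))
    (f'' := fun t ↦ (s - t) / σ ^ 2 * normalPDF σ (s - t)) (fun t ↦ ?_) (fun t ↦ ?_)
    (fun t ↦ by simpa using div_sq_mul_normalPDF_le hσ (s - t))
  · simpa using ((hasDerivAt_normalCDF hσ (s - t)).comp t (hinner t)).const_sub 1
  · refine ((hasDerivAt_normalPDF (s - t)).comp t (hinner t)).congr_deriv ?_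
    ring

end Gaussian

theorem utility_strictly_concave_general {d : ℕ}
    (c : EuclideanSpace ℝ (Fin d) → ℝ) (α σ s : ℝ)
    (z β : EuclideanSpace ℝ (Fin d))
    (hα : 0 < α) (hσ : 0 < σ)
    (hconv : StrongConvexOn Set.univ α c)
    (hβ : ‖β‖ = 1)
    (hnoise : σ ^ 2 > 1 / (α * Real.sqrt (2 * Real.pi * Real.exp 1))) :
    StrictConcaveOn ℝ Set.univ
      (fun x : EuclideanSpace ℝ (Fin d) =>
        -c (x - z) + 1 - normalCDF σ (s - ⟪β, x⟫)) := by
  have hmodulus : (σ ^ 2 * √(2 * π * exp 1))⁻¹ < α := by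
    rw [gt_iff_lt, div_lt_iff₀ (by positivity)] at hnoise
    rw [inv_lt_iff_one_lt_mul₀ (by positivity)]
    linarith
  have hcost : StrongConcaveOn univ α fun x ↦ -c (x - z) := (hconv.comp_sub_const z).neg
  have hbenefit := (strongConcaveOn_one_sub_normalCDF_sub hσ s).comp_continuousLinearMap
    (by simp only [Left.neg_nonpos_iff]; positivity) (innerSL ℝ β) (by rw [innerSL_apply_norm, hβ])
  have hsum : (fun x ↦ -c (x - z) + 1 - normalCDF σ (s - ⟪β, x⟫))
      = (fun x ↦ -c (x - z)) + (fun t ↦ 1 - normalCDF σ (s - t)) ∘ innerSL ℝ β := by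
    funext x
    simp only [Pi.add_apply, Function.comp_apply, innerSL_apply_apply]
    ring
  rw [hsum]
  exact (hcost.add hbenefit).strictConcaveOn (by linarith)

theorem utility_strictly_concave {d : ℕ}
    (c : EuclideanSpace ℝ (Fin d) → ℝ) (α σ s : ℝ)
    (z β : EuclideanSpace ℝ (Fin d))
    (hα : 0 < α) (hσ : 0 < σ)
    (hc2 : ContDiff ℝ 2 c)
    (hconv : StrongConvexOn Set.univ α c)
    (hβ : ‖β‖ = 1)
    (hnoise : σ ^ 2 > 1 / (α * Real.sqrt (2 * Real.pi * Real.exp 1))) :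
    StrictConcaveOn ℝ Set.univ
      (fun x : EuclideanSpace ℝ (Fin d) =>
        -c (x - z) + 1 - normalCDF σ (s - ⟪β, x⟫)) :=
  utility_strictly_concave_general c α σ s z β hα hσ hconv hβ hnoise
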